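/- Ordering of the three quantum informations (Theorem): In the multi-parameter spectral-family setup, for every θ ∈ ℝ^p one has H(θ) ≤ C_L(θ) ≤ C_Υ(θ) in the Loewner order on real symmetric p×p matrices. Moreover, H(θ) = C_L(θ) if and only if ⟨w_j^{(m)}(θ), w_k(θ)⟩ = 0 for all m and all j ≠ k with p_j(θ) > 0 and p_k(θ) > 0; and C_L(θ) = C_Υ(θ) if and only if ⟨w_i^{(m)}(θ), w_i(θ)⟩ = 0 for all m and all i with p_i(θ) > 0. -/

import Mathlib

/-!
Write `z_{ij}^m = ⟨∂_m w_i, w_j⟩`. Entrywise, `C_L - H = Σ_{i<j} 16 p_i p_j / (p_i + p_j) Re(z_{ij} z_{ij}*)`,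
because `(a + b) - (a - b)² / (a + b) = 4ab / (a + b)`, and `C_Υ - C_L = Σ_i 4 p_i Re(z_{ii} z_{ii}*)`.
Each `Re(z z*) = (Re z)(Re z)ᵀ + (Im z)(Im z)ᵀ` is positive semidefinite, and a nonnegative
combination of them vanishes iff its diagonal does, i.e. iff every `z` of positive weight is zero.
Differentiating `⟨w_j, w_k⟩ = δ_{jk}` gives `z_{jk} = -conj z_{kj}`, which extends the condition
for `H = C_L` from pairs `j < k` to all `j ≠ k`.
-/

open scoped BigOperators

noncomputable section

/-- The Hermitian inner product on `Fin d → ℂ`, conjugate-linear in the first argument. -/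
def inn {d : ℕ} (x y : Fin d → ℂ) : ℂ := ∑ i, (starRingEnd ℂ) (x i) * y i

open ComplexConjugate Matrix Finset

lemma inn_conj_symm {d : ℕ} (x y : Fin d → ℂ) : conj (inn y x) = inn x y := by
  simp only [inn, map_sum, map_mul, Complex.conj_conj]
  exact sum_congr rfl fun i _ => mul_comm _ _

theorem HasDerivAt.inn {d : ℕ} {u v : ℝ → Fin d → ℂ} {u' v' : Fin d → ℂ} {t : ℝ}
    (hu : HasDerivAt u u' t) (hv : HasDerivAt v v' t) :
    HasDerivAt (fun s => inn (u s) (v s)) (inn u' (v t) + inn (u t) v') t := by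
  simp only [_root_.inn, ← sum_add_distrib]
  refine HasDerivAt.fun_sum fun i _ => ?_
  have hui : HasDerivAt (fun s => conj (u s i)) (conj (u' i)) t := by
    simpa using (hasDerivAt_pi.mp hu i).star
  exact hui.mul (hasDerivAt_pi.mp hv i)

lemma inn_partialDeriv_eq_neg_conj_of_orthonormal {d n : ℕ}
    {w : Fin d → (Fin n → ℝ) → Fin d → ℂ} {wd : Fin d → Fin n → (Fin n → ℝ) → Fin d → ℂ}
    (horth : ∀ θ i j, inn (w i θ) (w j θ) = if i = j then 1 else 0)
    (hwd : ∀ i k θ, HasDerivAt (fun t => w i (Function.update θ k t)) (wd i k θ) (θ k))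
    (θ : Fin n → ℝ) (m : Fin n) (j k : Fin d) :
    inn (wd j m θ) (w k θ) = -conj (inn (wd k m θ) (w j θ)) := by
  have hderiv := (hwd j m θ).inn (hwd k m θ)
  simp only [Function.update_eq_self, horth] at hderiv
  have hzero := hderiv.unique (hasDerivAt_const _ _)
  rw [← inn_conj_symm (w j θ) (wd k m θ)] at hzero
  exact eq_neg_of_add_eq_zero_left hzero

section reOuter

variable {κ ι : Type*}

def reOuter (z : κ → ℂ) : Matrix κ κ ℝ := of fun k l => (z k * conj (z l)).re

lemma reOuter_eq_add_vecMulVec (z : κ → ℂ) :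
    reOuter z = vecMulVec (fun k => (z k).re) (fun k => (z k).re)
      + vecMulVec (fun k => (z k).im) (fun k => (z k).im) := by
  ext k l
  simp [reOuter, vecMulVec_apply]

lemma posSemidef_reOuter [Finite κ] (z : κ → ℂ) : (reOuter z).PosSemidef := by
  rw [reOuter_eq_add_vecMulVec]
  exact (posSemidef_vecMulVec_self_star _).add (posSemidef_vecMulVec_self_star _)

lemma reOuter_apply_self (z : κ → ℂ) (k : κ) : reOuter z k k = Complex.normSq (z k) := by
  simp [reOuter, Complex.normSq_apply]

@[simp]
lemma reOuter_zero : reOuter (0 : κ → ℂ) = 0 := by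
  ext k l
  simp [reOuter]

variable (S : Finset ι) {c : ι → ℝ} (z : ι → κ → ℂ)

lemma posSemidef_sum_smul_reOuter [Finite κ] (hc : ∀ i ∈ S, 0 ≤ c i) :
    (∑ i ∈ S, c i • reOuter (z i)).PosSemidef :=
  posSemidef_sum S fun i hi => (posSemidef_reOuter _).smul (hc i hi)

lemma sum_smul_reOuter_eq_zero_iff [Fintype κ] (hc : ∀ i ∈ S, 0 ≤ c i) :
    ∑ i ∈ S, c i • reOuter (z i) = 0 ↔ ∀ i ∈ S, ∀ k, c i = 0 ∨ z i k = 0 := by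
  constructor
  · intro h i hi k
    have hdiag : ∑ j ∈ S, c j * Complex.normSq (z j k) = 0 := by
      simpa [Matrix.sum_apply, reOuter_apply_self] using congrFun (congrFun h k) k
    have hterm := (sum_eq_zero_iff_of_nonneg fun j hj =>
      mul_nonneg (hc j hj) (Complex.normSq_nonneg _)).mp hdiag i hi
    simpa using hterm
  · intro h
    refine sum_eq_zero fun i hi => ?_
    by_cases hci : c i = 0
    · simp [hci]
    · have hzi : z i = 0 := funext fun k => (h i hi k).resolve_left hci
      simp [hzi]

lemma re_sum_ite_ofReal_mul_conj [Fintype ι] (P : ι → Prop) [DecidablePred P] (a : ι → ℝ)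
    (k l : κ) :
    (∑ i, if P i then (a i : ℂ) * z i k * conj (z i l) else 0).re
      = (∑ i ∈ univ.filter P, a i • reOuter (z i)) k l := by
  rw [sum_filter, Matrix.sum_apply, Complex.re_sum]
  refine sum_congr rfl fun i _ => ?_
  split_ifs <;> simp [reOuter, mul_assoc]

lemma re_sum_ite_sub_re_sum_ite [Fintype ι] (P : ι → Prop) [DecidablePred P] {a b c : ι → ℝ}
    (habc : ∀ i, P i → a i - b i = c i) (k l : κ) :
    (∑ i, if P i then (a i : ℂ) * z i k * conj (z i l) else 0).re
        - (∑ i, if P i then (b i : ℂ) * z i k * conj (z i l) else 0).re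
      = (∑ i ∈ univ.filter P, c i • reOuter (z i)) k l := by
  rw [re_sum_ite_ofReal_mul_conj, re_sum_ite_ofReal_mul_conj, ← Matrix.sub_apply,
    ← sum_sub_distrib]
  simp only [← sub_smul]
  exact congrFun (congrFun (sum_congr rfl fun i hi => by rw [habc i (mem_filter.mp hi).2]) k) l

end reOuter

lemma add_sub_sq_div_add (a b : ℝ) : a + b - (a - b) ^ 2 / (a + b) = 4 * a * b / (a + b) := by
  rcases eq_or_ne (a + b) 0 with h | h
  · simp [h]
  · field_simp
    ring

lemma forall_pair_weight_eq_zero_or_iff {ι μ : Type*} [Fintype ι] [LinearOrder ι]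
    {p : ι → ℝ} (hp : ∀ i, 0 ≤ p i) {z : ι → ι → μ → ℂ}
    (hz : ∀ j k m, z j k m = -conj (z k j m)) :
    (∀ q ∈ univ.filter (fun q : ι × ι => q.1 < q.2 ∧ 0 < p q.1 + p q.2), ∀ m,
        4 * (4 * p q.1 * p q.2 / (p q.1 + p q.2)) = 0 ∨ z q.1 q.2 m = 0)
      ↔ ∀ m j k, j ≠ k → 0 < p j → 0 < p k → z j k m = 0 := by
  constructor
  · intro h m j k hjk hj hk
    have hweight : ∀ a b, 0 < p a → 0 < p b → 4 * (4 * p a * p b / (p a + p b)) ≠ 0 :=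
      fun a b ha hb => by positivity
    rcases hjk.lt_or_gt with hlt | hgt
    · exact (h (j, k) (by simp [hlt]; positivity) m).resolve_left (hweight j k hj hk)
    · rw [hz, (h (k, j) (by simp [hgt]; positivity) m).resolve_left (hweight k j hk hj),
        map_zero, neg_zero]
  · intro h q hq m
    by_cases hpos : 0 < p q.1 ∧ 0 < p q.2
    · exact Or.inr (h m _ _ (mem_filter.mp hq).2.1.ne hpos.1 hpos.2)
    · left
      rw [not_and_or, not_lt, not_lt] at hpos
      rcases hpos with h0 | h0 <;> simp [le_antisymm h0 (hp _)]

theorem ordering_H_CL_CUpsilon_general {d n : ℕ}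
    (p : Fin d → (Fin n → ℝ) → ℝ) (w : Fin d → (Fin n → ℝ) → (Fin d → ℂ))
    (pd : Fin d → Fin n → (Fin n → ℝ) → ℝ)
    (wd : Fin d → Fin n → (Fin n → ℝ) → (Fin d → ℂ))
    (horth : ∀ θ (i j : Fin d), inn (w i θ) (w j θ) = if i = j then 1 else 0)
    (hpnn : ∀ (i : Fin d) θ, 0 ≤ p i θ)
    (hwd : ∀ (i : Fin d) (k : Fin n) θ,
      HasDerivAt (fun t => w i (Function.update θ k t)) (wd i k θ) (θ k))
    (C CL H : (Fin n → ℝ) → Matrix (Fin n) (Fin n) ℝ)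
    (hC : ∀ θ (k l : Fin n), C θ k l =
        (∑ i, if 0 < p i θ then pd i k θ * pd i l θ / p i θ else 0)
        + 4 * (∑ i, ∑ j, if i < j ∧ 0 < p i θ + p j θ then
            ((p i θ + p j θ : ℝ) : ℂ) * inn (wd i k θ) (w j θ) * inn (w j θ) (wd i l θ)
            else 0).re
        + 4 * (∑ i, if 0 < p i θ then
            ((p i θ : ℝ) : ℂ) * inn (wd i k θ) (w i θ) * inn (w i θ) (wd i l θ)
            else 0).re)
    (hCL : ∀ θ (k l : Fin n), CL θ k l =
        (∑ i, if 0 < p i θ then pd i k θ * pd i l θ / p i θ else 0)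
        + 4 * (∑ i, ∑ j, if i < j ∧ 0 < p i θ + p j θ then
            ((p i θ + p j θ : ℝ) : ℂ) * inn (wd i k θ) (w j θ) * inn (w j θ) (wd i l θ)
            else 0).re)
    (hH : ∀ θ (k l : Fin n), H θ k l =
        (∑ i, if 0 < p i θ then pd i k θ * pd i l θ / p i θ else 0)
        + 4 * (∑ i, ∑ j, if i < j ∧ 0 < p i θ + p j θ then
            (((p i θ - p j θ) ^ 2 / (p i θ + p j θ) : ℝ) : ℂ) *
              inn (wd i k θ) (w j θ) * inn (w j θ) (wd i l θ) else 0).re) :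
    ∀ θ : Fin n → ℝ,
      (CL θ - H θ).PosSemidef ∧
      (C θ - CL θ).PosSemidef ∧
      (H θ = CL θ ↔ ∀ (m : Fin n) (j k : Fin d), j ≠ k →
        0 < p j θ → 0 < p k θ → inn (wd j m θ) (w k θ) = 0) ∧
      (CL θ = C θ ↔ ∀ (m : Fin n) (i : Fin d),
        0 < p i θ → inn (wd i m θ) (w i θ) = 0) := by
  intro θ
  set z : Fin d → Fin d → Fin n → ℂ := fun i j m => inn (wd i m θ) (w j θ)
  have hp : ∀ i, 0 ≤ p i θ := (hpnn · θ)
  set pairs := univ.filter fun q : Fin d × Fin d => q.1 < q.2 ∧ 0 < p q.1 θ + p q.2 θ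
  have hCLH : CL θ - H θ = ∑ q ∈ pairs,
      (4 * (4 * p q.1 θ * p q.2 θ / (p q.1 θ + p q.2 θ))) • reOuter (z q.1 q.2) := by
    ext k l
    rw [Matrix.sub_apply, hCL, hH, add_sub_add_left_eq_sub, ← mul_sub]
    simp only [← inn_conj_symm (w _ θ) (wd _ _ θ), ← Fintype.sum_prod_type']
    rw [re_sum_ite_sub_re_sum_ite (fun q : Fin d × Fin d => z q.1 q.2) _
      fun q _ => add_sub_sq_div_add (p q.1 θ) (p q.2 θ)]
    simp only [Matrix.sum_apply, Matrix.smul_apply, smul_eq_mul, mul_sum, mul_assoc]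
    rfl
  have hCCL : C θ - CL θ =
      ∑ i ∈ univ.filter (fun i => 0 < p i θ), (4 * p i θ) • reOuter (z i i) := by
    ext k l
    rw [Matrix.sub_apply, hC, hCL, add_sub_cancel_left]
    simp only [← inn_conj_symm (w _ θ) (wd _ _ θ)]
    rw [re_sum_ite_ofReal_mul_conj (fun i => z i i)]
    simp only [Matrix.sum_apply, Matrix.smul_apply, smul_eq_mul, mul_sum, mul_assoc]
  have hpair : ∀ q ∈ pairs, 0 ≤ 4 * (4 * p q.1 θ * p q.2 θ / (p q.1 θ + p q.2 θ)) :=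
    fun q _ => by have := hp q.1; have := hp q.2; positivity
  have hsingle : ∀ i ∈ univ.filter (0 < p · θ), 0 ≤ 4 * p i θ := fun i _ => by linarith [hp i]
  refine ⟨hCLH ▸ posSemidef_sum_smul_reOuter _ _ hpair,
    hCCL ▸ posSemidef_sum_smul_reOuter _ _ hsingle, ?_, ?_⟩
  · rw [eq_comm, ← sub_eq_zero, hCLH, sum_smul_reOuter_eq_zero_iff _ _ hpair,
      forall_pair_weight_eq_zero_or_iff hp
        fun j k m => inn_partialDeriv_eq_neg_conj_of_orthonormal horth hwd θ m j k]
  · rw [eq_comm, ← sub_eq_zero, hCCL, sum_smul_reOuter_eq_zero_iff _ _ hsingle]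
    simp +contextual [z, forall_comm (α := Fin n), ne_of_gt]

/-- **Ordering of the three quantum informations** `H(θ) ≤ C_L(θ) ≤ C_Υ(θ)` in the
Loewner order, with the stated equality characterizations. -/
theorem ordering_H_CL_CUpsilon {d n : ℕ} (hd : 1 ≤ d) (hn : 1 ≤ n)
    (p : Fin d → (Fin n → ℝ) → ℝ) (w : Fin d → (Fin n → ℝ) → (Fin d → ℂ))
    (pd : Fin d → Fin n → (Fin n → ℝ) → ℝ)
    (wd : Fin d → Fin n → (Fin n → ℝ) → (Fin d → ℂ))
    (horth : ∀ θ (i j : Fin d), inn (w i θ) (w j θ) = if i = j then 1 else 0)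
    (hpnn : ∀ (i : Fin d) θ, 0 ≤ p i θ) (hpsum : ∀ θ, ∑ i, p i θ = 1)
    (hpd : ∀ (i : Fin d) (k : Fin n) θ,
      HasDerivAt (fun t => p i (Function.update θ k t)) (pd i k θ) (θ k))
    (hwd : ∀ (i : Fin d) (k : Fin n) θ,
      HasDerivAt (fun t => w i (Function.update θ k t)) (wd i k θ) (θ k))
    (hpdC : ∀ i : Fin d, Continuous fun θ k => pd i k θ)
    (hwdC : ∀ i : Fin d, Continuous fun θ k => wd i k θ)
    (hdich : ∀ i : Fin d, (∀ θ, 0 < p i θ) ∨ (∀ θ, p i θ = 0))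
    (C CL H : (Fin n → ℝ) → Matrix (Fin n) (Fin n) ℝ)
    (hC : ∀ θ (k l : Fin n), C θ k l =
        (∑ i, if 0 < p i θ then pd i k θ * pd i l θ / p i θ else 0)
        + 4 * (∑ i, ∑ j, if i < j ∧ 0 < p i θ + p j θ then
            ((p i θ + p j θ : ℝ) : ℂ) * inn (wd i k θ) (w j θ) * inn (w j θ) (wd i l θ)
            else 0).re
        + 4 * (∑ i, if 0 < p i θ then
            ((p i θ : ℝ) : ℂ) * inn (wd i k θ) (w i θ) * inn (w i θ) (wd i l θ)
            else 0).re)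
    (hCL : ∀ θ (k l : Fin n), CL θ k l =
        (∑ i, if 0 < p i θ then pd i k θ * pd i l θ / p i θ else 0)
        + 4 * (∑ i, ∑ j, if i < j ∧ 0 < p i θ + p j θ then
            ((p i θ + p j θ : ℝ) : ℂ) * inn (wd i k θ) (w j θ) * inn (w j θ) (wd i l θ)
            else 0).re)
    (hH : ∀ θ (k l : Fin n), H θ k l =
        (∑ i, if 0 < p i θ then pd i k θ * pd i l θ / p i θ else 0)
        + 4 * (∑ i, ∑ j, if i < j ∧ 0 < p i θ + p j θ then
            (((p i θ - p j θ) ^ 2 / (p i θ + p j θ) : ℝ) : ℂ) *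
              inn (wd i k θ) (w j θ) * inn (w j θ) (wd i l θ) else 0).re) :
    ∀ θ : Fin n → ℝ,
      (CL θ - H θ).PosSemidef ∧
      (C θ - CL θ).PosSemidef ∧
      (H θ = CL θ ↔ ∀ (m : Fin n) (j k : Fin d), j ≠ k →
        0 < p j θ → 0 < p k θ → inn (wd j m θ) (w k θ) = 0) ∧
      (CL θ = C θ ↔ ∀ (m : Fin n) (i : Fin d),
        0 < p i θ → inn (wd i m θ) (w i θ) = 0) :=
  ordering_H_CL_CUpsilon_general p w pd wd horth hpnn hwd C CL H hC hCL hH
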